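/- arXiv:1703.01624 — 7 statements merged into one kernel-verified Lean document; each statement's English description precedes it below -/
import Mathlib

section
/- In a finite game graph with thresholds α_n (base value 0 at non-terminal positions) and β_n (base value 1 at non-terminal positions), both satisfying the recursion f_{n+1}(P) = (max_w f_n(P_w) + min_b f_n(P_b))/2, we have α_n(P) ≤ β_m(P) for all positions P and all natural numbers n, m. -/
open Finset

/-- A finite game graph: each non-terminal position has nonempty finite sets of
White and Black options; terminal positions carry a value 0 (Black win) or 1 (White win). -/
structure GameGraph (P : Type) [Fintype P] [DecidableEq P] where
  terminal : P → Bool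
  tval : P → ℝ
  tval01 : ∀ p, terminal p = true → tval p = 0 ∨ tval p = 1
  W : P → Finset P
  B : P → Finset P
  Wne : ∀ p, terminal p = false → (W p).Nonempty
  Bne : ∀ p, terminal p = false → (B p).Nonempty

variable {P : Type} [Fintype P] [DecidableEq P]

/-- The thresholds `α_n`, with base value 0 at non-terminal positions. -/
noncomputable def GameGraph.alpha (G : GameGraph P) : ℕ → P → ℝ
  | 0, p => if G.terminal p then G.tval p else 0
  | n+1, p =>
    if h : G.terminal p = true then G.tval p
    else ((G.W p).sup' (G.Wne p (by simpa using h)) (G.alpha n)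
        + (G.B p).inf' (G.Bne p (by simpa using h)) (G.alpha n)) / 2

/-- The thresholds `β_n`, with base value 1 at non-terminal positions. -/
noncomputable def GameGraph.beta (G : GameGraph P) : ℕ → P → ℝ
  | 0, p => if G.terminal p then G.tval p else 1
  | n+1, p =>
    if h : G.terminal p = true then G.tval p
    else ((G.W p).sup' (G.Wne p (by simpa using h)) (G.beta n)
        + (G.B p).inf' (G.Bne p (by simpa using h)) (G.beta n)) / 2

noncomputable def GameGraph.alphaLim (G : GameGraph P) (p : P) : ℝ := ⨆ n, G.alpha n p

noncomputable def GameGraph.betaLim (G : GameGraph P) (p : P) : ℝ := ⨅ n, G.beta n p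

/-- A Richman function: values in `[0,1]`, prescribed terminal values, and the
averaging equation at non-terminal positions. -/
def GameGraph.IsRichman (G : GameGraph P) (x : P → ℝ) : Prop :=
  (∀ p, 0 ≤ x p ∧ x p ≤ 1) ∧
  (∀ p, G.terminal p = true → x p = G.tval p) ∧
  (∀ p, ∀ h : G.terminal p = false,
    x p = ((G.W p).sup' (G.Wne p h) x + (G.B p).inf' (G.Bne p h) x) / 2)


lemma alpha_terminal (G : GameGraph P) (n : ℕ) {p : P} (h : G.terminal p = true) :
    G.alpha n p = G.tval p := by cases n <;> simp [GameGraph.alpha, h]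

lemma beta_terminal (G : GameGraph P) (n : ℕ) {p : P} (h : G.terminal p = true) :
    G.beta n p = G.tval p := by cases n <;> simp [GameGraph.beta, h]

lemma alpha_succ (G : GameGraph P) (n : ℕ) {p : P} (h : G.terminal p = false) :
    G.alpha (n + 1) p = ((G.W p).sup' (G.Wne p h) (G.alpha n)
      + (G.B p).inf' (G.Bne p h) (G.alpha n)) / 2 := by
  simp only [GameGraph.alpha]
  rw [dif_neg (by simp [h])]

lemma beta_succ (G : GameGraph P) (n : ℕ) {p : P} (h : G.terminal p = false) :
    G.beta (n + 1) p = ((G.W p).sup' (G.Wne p h) (G.beta n)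
      + (G.B p).inf' (G.Bne p h) (G.beta n)) / 2 := by
  simp only [GameGraph.beta]
  rw [dif_neg (by simp [h])]

lemma alpha_nonneg (G : GameGraph P) (n : ℕ) (p : P) : 0 ≤ G.alpha n p := by
  induction n generalizing p with
  | zero =>
    cases hT : G.terminal p
    · simp [GameGraph.alpha, hT]
    · rw [alpha_terminal G 0 hT]
      rcases G.tval01 p hT with h | h <;> simp [h]
  | succ n ih =>
    cases hT : G.terminal p
    · rw [alpha_succ G n hT]
      have h1 : (0:ℝ) ≤ (G.W p).sup' (G.Wne p hT) (G.alpha n) := by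
        obtain ⟨w, hw⟩ := G.Wne p hT
        exact le_trans (ih w) (Finset.le_sup' _ hw)
      have h2 : (0:ℝ) ≤ (G.B p).inf' (G.Bne p hT) (G.alpha n) :=
        Finset.le_inf' _ _ fun b _ => ih b
      linarith
    · rw [alpha_terminal G _ hT]
      rcases G.tval01 p hT with h | h <;> simp [h]

lemma beta_le_one (G : GameGraph P) (n : ℕ) (p : P) : G.beta n p ≤ 1 := by
  induction n generalizing p with
  | zero =>
    cases hT : G.terminal p
    · simp [GameGraph.beta, hT]
    · rw [beta_terminal G 0 hT]
      rcases G.tval01 p hT with h | h <;> simp [h]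
  | succ n ih =>
    cases hT : G.terminal p
    · rw [beta_succ G n hT]
      have h1 : (G.W p).sup' (G.Wne p hT) (G.beta n) ≤ 1 :=
        Finset.sup'_le _ _ fun w _ => ih w
      have h2 : (G.B p).inf' (G.Bne p hT) (G.beta n) ≤ 1 := by
        obtain ⟨b, hb⟩ := G.Bne p hT
        exact le_trans (Finset.inf'_le _ hb) (ih b)
      linarith
    · rw [beta_terminal G _ hT]
      rcases G.tval01 p hT with h | h <;> simp [h]

lemma alpha_mono (G : GameGraph P) (n : ℕ) (p : P) :
    G.alpha n p ≤ G.alpha (n + 1) p := by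
  induction n generalizing p with
  | zero =>
    cases hT : G.terminal p
    · rw [alpha_succ G 0 hT]
      have h1 : (0:ℝ) ≤ (G.W p).sup' (G.Wne p hT) (G.alpha 0) := by
        obtain ⟨w, hw⟩ := G.Wne p hT
        exact le_trans (alpha_nonneg G 0 w) (Finset.le_sup' _ hw)
      have h2 : (0:ℝ) ≤ (G.B p).inf' (G.Bne p hT) (G.alpha 0) :=
        Finset.le_inf' _ _ fun b _ => alpha_nonneg G 0 b
      have : G.alpha 0 p = 0 := by simp [GameGraph.alpha, hT]
      rw [this]; linarith
    · rw [alpha_terminal G _ hT, alpha_terminal G _ hT]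
  | succ n ih =>
    cases hT : G.terminal p
    · rw [alpha_succ G n hT, alpha_succ G (n+1) hT]
      have h1 : (G.W p).sup' (G.Wne p hT) (G.alpha n)
          ≤ (G.W p).sup' (G.Wne p hT) (G.alpha (n+1)) :=
        Finset.sup'_le _ _ fun w hw => le_trans (ih w) (Finset.le_sup' _ hw)
      have h2 : (G.B p).inf' (G.Bne p hT) (G.alpha n)
          ≤ (G.B p).inf' (G.Bne p hT) (G.alpha (n+1)) :=
        Finset.le_inf' _ _ fun b hb => le_trans (Finset.inf'_le _ hb) (ih b)
      linarith
    · rw [alpha_terminal G _ hT, alpha_terminal G _ hT]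

lemma beta_anti (G : GameGraph P) (n : ℕ) (p : P) :
    G.beta (n + 1) p ≤ G.beta n p := by
  induction n generalizing p with
  | zero =>
    cases hT : G.terminal p
    · rw [beta_succ G 0 hT]
      have h1 : (G.W p).sup' (G.Wne p hT) (G.beta 0) ≤ 1 :=
        Finset.sup'_le _ _ fun w _ => beta_le_one G 0 w
      have h2 : (G.B p).inf' (G.Bne p hT) (G.beta 0) ≤ 1 := by
        obtain ⟨b, hb⟩ := G.Bne p hT
        exact le_trans (Finset.inf'_le _ hb) (beta_le_one G 0 b)
      have : G.beta 0 p = 1 := by simp [GameGraph.beta, hT]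
      rw [this]; linarith
    · rw [beta_terminal G _ hT, beta_terminal G _ hT]
  | succ n ih =>
    cases hT : G.terminal p
    · rw [beta_succ G n hT, beta_succ G (n+1) hT]
      have h1 : (G.W p).sup' (G.Wne p hT) (G.beta (n+1))
          ≤ (G.W p).sup' (G.Wne p hT) (G.beta n) :=
        Finset.sup'_le _ _ fun w hw => le_trans (ih w) (Finset.le_sup' _ hw)
      have h2 : (G.B p).inf' (G.Bne p hT) (G.beta (n+1))
          ≤ (G.B p).inf' (G.Bne p hT) (G.beta n) :=
        Finset.le_inf' _ _ fun b hb => le_trans (Finset.inf'_le _ hb) (ih b)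
      linarith
    · rw [beta_terminal G _ hT, beta_terminal G _ hT]

lemma alpha_le_alpha_of_le (G : GameGraph P) {n m : ℕ} (h : n ≤ m) (p : P) :
    G.alpha n p ≤ G.alpha m p := by
  induction m with
  | zero => simp [Nat.le_zero.mp h]
  | succ m ih =>
    rcases Nat.lt_or_ge n (m+1) with h' | h'
    · exact le_trans (ih (Nat.lt_succ_iff.mp h')) (alpha_mono G m p)
    · have : n = m + 1 := le_antisymm h h'
      simp [this]

lemma beta_le_beta_of_le (G : GameGraph P) {n m : ℕ} (h : m ≤ n) (p : P) :
    G.beta n p ≤ G.beta m p := by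
  induction n with
  | zero => simp [Nat.le_zero.mp h]
  | succ n ih =>
    rcases Nat.lt_or_ge m (n+1) with h' | h'
    · exact le_trans (beta_anti G n p) (ih (Nat.lt_succ_iff.mp h'))
    · have : m = n + 1 := le_antisymm h h'
      simp [this]

lemma alpha_le_beta_same (G : GameGraph P) (n : ℕ) (p : P) :
    G.alpha n p ≤ G.beta n p := by
  induction n generalizing p with
  | zero =>
    cases hT : G.terminal p
    · simp [GameGraph.alpha, GameGraph.beta, hT]
    · rw [alpha_terminal G _ hT, beta_terminal G _ hT]
  | succ n ih =>
    cases hT : G.terminal p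
    · rw [alpha_succ G n hT, beta_succ G n hT]
      have h1 : (G.W p).sup' (G.Wne p hT) (G.alpha n)
          ≤ (G.W p).sup' (G.Wne p hT) (G.beta n) :=
        Finset.sup'_le _ _ fun w hw => le_trans (ih w) (Finset.le_sup' _ hw)
      have h2 : (G.B p).inf' (G.Bne p hT) (G.alpha n)
          ≤ (G.B p).inf' (G.Bne p hT) (G.beta n) :=
        Finset.le_inf' _ _ fun b hb => le_trans (Finset.inf'_le _ hb) (ih b)
      linarith
    · rw [alpha_terminal G _ hT, beta_terminal G _ hT]

/-- `α_n(P) ≤ β_m(P)` for all `n, m`. -/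
theorem alpha_le_beta (G : GameGraph P) (p : P) (n m : ℕ) :
    G.alpha n p ≤ G.beta m p :=
  le_trans (alpha_le_alpha_of_le G (Nat.le_max_left n m) p)
    (le_trans (alpha_le_beta_same G (max n m) p)
      (beta_le_beta_of_le G (Nat.le_max_right n m) p))
end

section
/- Let x be a Richman function on a finite game graph, i.e., a function from positions to [0,1] satisfying x(P) = (max_w x(P_w) + min_b x(P_b))/2 at non-terminal positions and taking the prescribed terminal values. Then for every n and every position P, α_n(P) ≤ x(P) ≤ β_n(P), where α_n and β_n are the thresholds with base values 0 and 1 respectively. Consequently the limits satisfy α(P) ≤ x(P) ≤ β(P). -/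
open Finset

variable {P : Type} [Fintype P] [DecidableEq P]

/-- any Richman function is squeezed between the thresholds:
`α_n(P) ≤ x(P) ≤ β_n(P)` for all `n`, and hence `α(P) ≤ x(P) ≤ β(P)`. -/
theorem richman_between (G : GameGraph P) (x : P → ℝ) (hx : G.IsRichman x) :
    (∀ n p, G.alpha n p ≤ x p ∧ x p ≤ G.beta n p) ∧
    (∀ p, G.alphaLim p ≤ x p ∧ x p ≤ G.betaLim p) := by
  obtain ⟨h01, ht, havg⟩ := hx
  have main : ∀ n p, G.alpha n p ≤ x p ∧ x p ≤ G.beta n p := by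
    intro n
    induction n with
    | zero =>
      intro p
      by_cases h : G.terminal p = true
      · simp [GameGraph.alpha, GameGraph.beta, h, ht p h]
      · have h' : G.terminal p = false := by simpa using h
        simp [GameGraph.alpha, GameGraph.beta, h', (h01 p).1, (h01 p).2]
    | succ n ih =>
      intro p
      by_cases h : G.terminal p = true
      · simp [GameGraph.alpha, GameGraph.beta, h, ht p h]
      · have h' : G.terminal p = false := by simpa using h
        rw [GameGraph.alpha, GameGraph.beta, dif_neg h, dif_neg h, havg p h']
        constructor
        · apply div_le_div_of_nonneg_right _ (by norm_num : (0:ℝ) ≤ 2)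
          apply add_le_add
          · exact Finset.sup'_mono_fun (fun q _ => (ih q).1)
          · exact Finset.le_inf' _ _ fun q hq =>
              (Finset.inf'_le _ hq).trans ((ih q).1)
        · apply div_le_div_of_nonneg_right _ (by norm_num : (0:ℝ) ≤ 2)
          apply add_le_add
          · exact Finset.sup'_mono_fun (fun q _ => (ih q).2)
          · exact Finset.le_inf' _ _ fun q hq =>
              (Finset.inf'_le _ hq).trans ((ih q).2)
  refine ⟨main, fun p => ⟨?_, ?_⟩⟩
  · exact ciSup_le fun n => (main n p).1
  · exact le_ciInf fun n => (main n p).2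
end

section
/- Let x be a function on a finite game graph with values in [0,1] and for each non-terminal position P fix a White option P_W and a Black option P_B. Suppose that for every non-terminal P, every White option P_w and every Black option P_b: x(P) ≥ (x(P_w) + x(P_B))/2 and x(P) ≤ (x(P_W) + x(P_b))/2. Then x satisfies the Richman equation x(P) = (max_w x(P_w) + min_b x(P_b))/2 at every non-terminal position, with x(P_W) = max_w x(P_w) and x(P_B) = min_b x(P_b). -/
open Finset

variable {P : Type} [Fintype P] [DecidableEq P]

/-- every solution of the linear system of inequalities (for a fixed
choice of options `P_W`, `P_B` at each non-terminal position) satisfies the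
nonlinear Richman equation, with `x(P_W)` the max and `x(P_B)` the min. -/
theorem linear_system_gives_richman (G : GameGraph P) (x : P → ℝ)
    (hx01 : ∀ p, 0 ≤ x p ∧ x p ≤ 1)
    (PW PB : ∀ p, G.terminal p = false → P)
    (hPW : ∀ p (h : G.terminal p = false), PW p h ∈ G.W p)
    (hPB : ∀ p (h : G.terminal p = false), PB p h ∈ G.B p)
    (hlow : ∀ p (h : G.terminal p = false), ∀ w ∈ G.W p, (x w + x (PB p h)) / 2 ≤ x p)
    (hhigh : ∀ p (h : G.terminal p = false), ∀ b ∈ G.B p, x p ≤ (x (PW p h) + x b) / 2) :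
    ∀ p (h : G.terminal p = false),
      x (PW p h) = (G.W p).sup' (G.Wne p h) x ∧
      x (PB p h) = (G.B p).inf' (G.Bne p h) x ∧
      x p = ((G.W p).sup' (G.Wne p h) x + (G.B p).inf' (G.Bne p h) x) / 2 := by
  intro p h
  have h1 : (x (PW p h) + x (PB p h)) / 2 ≤ x p := hlow p h _ (hPW p h)
  have h2 : x p ≤ (x (PW p h) + x (PB p h)) / 2 := hhigh p h _ (hPB p h)
  have heq : x p = (x (PW p h) + x (PB p h)) / 2 := le_antisymm h2 h1
  have hsup : x (PW p h) = (G.W p).sup' (G.Wne p h) x := by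
    apply le_antisymm (Finset.le_sup' x (hPW p h))
    apply Finset.sup'_le
    intro w hw
    have := hlow p h w hw
    rw [heq] at this
    linarith
  have hinf : x (PB p h) = (G.B p).inf' (G.Bne p h) x := by
    apply le_antisymm _ (Finset.inf'_le x (hPB p h))
    apply Finset.le_inf'
    intro b hb
    have := hhigh p h b hb
    rw [heq] at this
    linarith
  exact ⟨hsup, hinf, by rw [heq, hsup, hinf]⟩
end

section
/- In a finite game graph, the limit values α(P) and β(P) are rational numbers for every position P. -/
open Finset

variable {P : Type} [Fintype P] [DecidableEq P]

/-! The limits `α = ⨆ₙ αₙ` and `β = ⨅ₙ βₙ` are the least and the greatest Richman functions, i.e.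
fixed points in `[0,1]` of the averaging operator `step`. An extremal Richman function `x` is
determined by the linear equations with rational coefficients that it satisfies: if `y` satisfies
them as well, then for small `|ε|` the function `x + ε (y - x)` still has the same optimal options,
the same values `0` and `1`, and the same averaging equations as `x`, so it is Richman, and
extremality of `x` in both directions `±ε` forces `y = x`. Finally, a real vector determined by
rational linear equations is rational. -/

open Filter Topology

section LinearRelations

variable (F : Type*) {K Q : Type*} [Fintype Q]

def SatisfiesLinearRelations [CommSemiring F] [Semiring K] [Algebra F K] (x y : Q → K) : Prop :=
  ∀ (a : Q → F) (c : F), ∑ p, a p • x p = algebraMap F K c → ∑ p, a p • y p = algebraMap F K c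

variable {F}

theorem SatisfiesLinearRelations.three_term [CommSemiring F] [Semiring K] [Algebra F K]
    {x y : Q → K} (h : SatisfiesLinearRelations F x y) (u v w : Q) (r s t c : F)
    (hx : r • x u + s • x v + t • x w = algebraMap F K c) :
    r • y u + s • y v + t • y w = algebraMap F K c := by
  classical
  have hsum : ∀ z : Q → K, ∑ p, (Pi.single u r + Pi.single v s + Pi.single w t : Q → F) p • z p
      = r • z u + s • z v + t • z w := fun z => by
    simp [add_smul, sum_add_distrib, Pi.single_apply, ite_smul]
  rw [← hsum] at hx ⊢
  exact h _ c hx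

theorem SatisfiesLinearRelations.apply_eq_algebraMap [CommSemiring F] [Semiring K] [Algebra F K]
    {x y : Q → K} (h : SatisfiesLinearRelations F x y) {u : Q} {c : F}
    (hx : x u = algebraMap F K c) : y u = algebraMap F K c := by
  simpa using h.three_term u u u 1 0 0 c (by simpa using hx)

theorem SatisfiesLinearRelations.apply_eq_apply [CommRing F] [Ring K] [Algebra F K]
    {x y : Q → K} (h : SatisfiesLinearRelations F x y) {u v : Q} (hx : x u = x v) : y u = y v := by
  simpa [add_neg_eq_zero] using h.three_term u v v 1 (-1) 0 0 (by simp [hx])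

/-- Applying an `F`-linear retraction `K → F` coordinatewise to `x` gives another solution of all
the `F`-linear equations satisfied by `x`. -/
theorem mem_range_algebraMap_of_satisfiesLinearRelations [Field F] [Ring K] [Nontrivial K]
    [Algebra F K] {x : Q → K} (hx : ∀ y, SatisfiesLinearRelations F x y → y = x) (p : Q) :
    x p ∈ Set.range (algebraMap F K) := by
  obtain ⟨g, hg⟩ := (Algebra.linearMap F K).exists_leftInverse_of_injective
    (LinearMap.ker_eq_bot.2 (algebraMap F K).injective)
  have hg' : ∀ c, g (algebraMap F K c) = c := fun c => LinearMap.congr_fun hg c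
  have hrel : SatisfiesLinearRelations F x (fun q => algebraMap F K (g (x q))) := by
    intro a c hac
    calc ∑ q, a q • algebraMap F K (g (x q)) = algebraMap F K (g (∑ q, a q • x q)) := by
          rw [map_sum, map_sum]
          refine sum_congr rfl fun q _ => ?_
          rw [map_smul, smul_eq_mul, map_mul, Algebra.smul_def]
      _ = algebraMap F K c := by rw [hac, hg']
  exact ⟨g (x p), congrFun (hx _ hrel) p⟩

end LinearRelations

lemma eventually_add_mul_le {a b c d : ℝ} (hab : a ≤ b) (hcd : a = b → c = d) :
    ∀ᶠ ε in 𝓝 (0 : ℝ), a + ε * c ≤ b + ε * d := by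
  rcases hab.lt_or_eq with hlt | rfl
  · have hlim : ∀ r s : ℝ, Tendsto (fun ε => r + ε * s) (𝓝 0) (𝓝 r) := fun r s => by
      have hc : Continuous fun ε : ℝ => r + ε * s := by fun_prop
      simpa using hc.tendsto 0
    exact ((hlim a c).eventually_lt (hlim b d) hlt).mono fun _ => le_of_lt
  · rw [hcd rfl]
    exact Eventually.of_forall fun _ => le_rfl

namespace GameGraph

variable (G : GameGraph P)

noncomputable def step (f : P → ℝ) (p : P) : ℝ :=
  if h : G.terminal p = true then G.tval p
  else ((G.W p).sup' (G.Wne p (by simpa using h)) f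
      + (G.B p).inf' (G.Bne p (by simpa using h)) f) / 2

section Step

variable {G}

lemma step_of_terminal (f : P → ℝ) {p : P} (h : G.terminal p = true) : G.step f p = G.tval p :=
  dif_pos h

lemma step_of_not_terminal (f : P → ℝ) {p : P} (h : G.terminal p = false) :
    G.step f p = ((G.W p).sup' (G.Wne p h) f + (G.B p).inf' (G.Bne p h) f) / 2 :=
  dif_neg (by simp [h])

lemma tval_mem_Icc {p : P} (h : G.terminal p = true) : G.tval p ∈ Set.Icc 0 1 := by
  rcases G.tval01 p h with h | h <;> simp [h]

variable (G)

lemma monotone_step : Monotone G.step := by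
  intro f g hfg p
  cases h : G.terminal p
  · rw [step_of_not_terminal f h, step_of_not_terminal g h]
    have hW := sup'_mono_fun (hs := G.Wne p h) fun w (_ : w ∈ G.W p) => hfg w
    have hB : (G.B p).inf' (G.Bne p h) f ≤ (G.B p).inf' (G.Bne p h) g :=
      le_inf' _ _ fun b hb => (inf'_le f hb).trans (hfg b)
    linarith
  · rw [step_of_terminal f h, step_of_terminal g h]

lemma continuous_step : Continuous G.step := by
  refine continuous_pi fun p => ?_
  cases h : G.terminal p
  · simp only [step_of_not_terminal _ h]
    fun_prop
  · simp only [step_of_terminal _ h]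
    exact continuous_const

lemma alpha_succ (n : ℕ) : G.alpha (n + 1) = G.step (G.alpha n) := rfl

lemma beta_succ (n : ℕ) : G.beta (n + 1) = G.step (G.beta n) := rfl

variable {G} {x : P → ℝ}

lemma step_mem_Icc {f : P → ℝ} (hf : f ∈ Set.Icc 0 1) : G.step f ∈ Set.Icc 0 1 := by
  have hconst : ∀ c : ℝ, c ∈ Set.Icc 0 1 → G.step (fun _ => c) ∈ Set.Icc 0 1 := fun c hc => by
    have hp : ∀ p, G.step (fun _ => c) p ∈ Set.Icc 0 1 := fun p => by
      cases h : G.terminal p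
      · simpa [step_of_not_terminal _ h] using hc
      · simpa [step_of_terminal _ h] using tval_mem_Icc h
    exact ⟨fun p => (hp p).1, fun p => (hp p).2⟩
  exact ⟨(hconst 0 (by simp)).1.trans (G.monotone_step hf.1),
    (G.monotone_step hf.2).trans (hconst 1 (by simp)).2⟩

lemma isRichman_iff : G.IsRichman x ↔ x ∈ Set.Icc 0 1 ∧ G.step x = x := by
  constructor
  · rintro ⟨h01, hterm, havg⟩
    refine ⟨⟨fun p => (h01 p).1, fun p => (h01 p).2⟩, funext fun p => ?_⟩
    cases h : G.terminal p
    · rw [step_of_not_terminal x h, ← havg p h]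
    · rw [step_of_terminal x h, hterm p h]
  · rintro ⟨⟨h0, h1⟩, hx⟩
    refine ⟨fun p => ⟨h0 p, h1 p⟩, fun p h => ?_, fun p h => ?_⟩
    · exact (congrFun hx p).symm.trans (step_of_terminal x h)
    · exact (congrFun hx p).symm.trans (step_of_not_terminal x h)

end Step

section Limits

variable {G} {x : P → ℝ}

lemma isRichman_iSup {f : ℕ → P → ℝ} (hf : ∀ n, f (n + 1) = G.step (f n)) (hmono : Monotone f)
    (h01 : ∀ n, f n ∈ Set.Icc 0 1) : G.IsRichman (⨆ n, f n) := by
  have hbdd : BddAbove (Set.range f) := ⟨1, by rintro _ ⟨n, rfl⟩; exact (h01 n).2⟩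
  have hlim := tendsto_atTop_ciSup hmono hbdd
  have hstep : Tendsto (fun n => G.step (f n)) atTop (𝓝 (⨆ n, f n)) := by
    simpa only [hf] using (tendsto_add_atTop_iff_nat 1).2 hlim
  refine isRichman_iff.2 ⟨⟨(h01 0).1.trans (le_ciSup hbdd 0), ciSup_le fun n => (h01 n).2⟩, ?_⟩
  exact tendsto_nhds_unique ((G.continuous_step.tendsto _).comp hlim) hstep

lemma isRichman_iInf {f : ℕ → P → ℝ} (hf : ∀ n, f (n + 1) = G.step (f n)) (hanti : Antitone f)
    (h01 : ∀ n, f n ∈ Set.Icc 0 1) : G.IsRichman (⨅ n, f n) := by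
  have hbdd : BddBelow (Set.range f) := ⟨0, by rintro _ ⟨n, rfl⟩; exact (h01 n).1⟩
  have hlim := tendsto_atTop_ciInf hanti hbdd
  have hstep : Tendsto (fun n => G.step (f n)) atTop (𝓝 (⨅ n, f n)) := by
    simpa only [hf] using (tendsto_add_atTop_iff_nat 1).2 hlim
  refine isRichman_iff.2 ⟨⟨le_ciInf fun n => (h01 n).1, (ciInf_le hbdd 0).trans (h01 0).2⟩, ?_⟩
  exact tendsto_nhds_unique ((G.continuous_step.tendsto _).comp hlim) hstep

lemma alpha_le_of_isRichman (hx : G.IsRichman x) (n : ℕ) : G.alpha n ≤ x := by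
  induction n with
  | zero =>
    intro p
    cases h : G.terminal p
    · simpa [alpha, h] using (hx.1 p).1
    · simp [alpha, h, hx.2.1 p h]
  | succ n ih => exact (G.monotone_step ih).trans_eq (isRichman_iff.1 hx).2

lemma le_beta_of_isRichman (hx : G.IsRichman x) (n : ℕ) : x ≤ G.beta n := by
  induction n with
  | zero =>
    intro p
    cases h : G.terminal p
    · simpa [beta, h] using (hx.1 p).2
    · simp [beta, h, hx.2.1 p h]
  | succ n ih => exact (isRichman_iff.1 hx).2.symm.trans_le (G.monotone_step ih)

variable (G)

lemma alpha_mem_Icc (n : ℕ) : G.alpha n ∈ Set.Icc 0 1 := by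
  induction n with
  | zero =>
    have hp : ∀ p, G.alpha 0 p ∈ Set.Icc 0 1 := fun p => by
      cases h : G.terminal p
      · simp [alpha, h]
      · simpa [alpha, h] using tval_mem_Icc h
    exact ⟨fun p => (hp p).1, fun p => (hp p).2⟩
  | succ n ih => exact step_mem_Icc ih

lemma beta_mem_Icc (n : ℕ) : G.beta n ∈ Set.Icc 0 1 := by
  induction n with
  | zero =>
    have hp : ∀ p, G.beta 0 p ∈ Set.Icc 0 1 := fun p => by
      cases h : G.terminal p
      · simp [beta, h]
      · simpa [beta, h] using tval_mem_Icc h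
    exact ⟨fun p => (hp p).1, fun p => (hp p).2⟩
  | succ n ih => exact step_mem_Icc ih

lemma monotone_alpha : Monotone G.alpha := by
  refine monotone_nat_of_le_succ fun n => ?_
  induction n with
  | zero =>
    intro p
    cases h : G.terminal p
    · simpa [alpha, h] using (G.alpha_mem_Icc 1).1 p
    · simp [alpha, h]
  | succ n ih => exact G.monotone_step ih

lemma antitone_beta : Antitone G.beta := by
  refine antitone_nat_of_succ_le fun n => ?_
  induction n with
  | zero =>
    intro p
    cases h : G.terminal p
    · simpa [beta, h] using (G.beta_mem_Icc 1).2 p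
    · simp [beta, h]
  | succ n ih => exact G.monotone_step ih

lemma alphaLim_eq_iSup : G.alphaLim = ⨆ n, G.alpha n := funext fun _ => (iSup_apply ..).symm

lemma betaLim_eq_iInf : G.betaLim = ⨅ n, G.beta n := funext fun _ => (iInf_apply ..).symm

theorem isLeast_alphaLim : IsLeast {x | G.IsRichman x} G.alphaLim := by
  rw [alphaLim_eq_iSup]
  exact ⟨isRichman_iSup G.alpha_succ G.monotone_alpha G.alpha_mem_Icc,
    fun _ hx => ciSup_le (alpha_le_of_isRichman hx)⟩

theorem isGreatest_betaLim : IsGreatest {x | G.IsRichman x} G.betaLim := by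
  rw [betaLim_eq_iInf]
  exact ⟨isRichman_iInf G.beta_succ G.antitone_beta G.beta_mem_Icc,
    fun _ hx => le_ciInf (le_beta_of_isRichman hx)⟩

end Limits

section Rigidity

variable {G} {x y : P → ℝ}

lemma IsRichman.add_smul_sub (hx : G.IsRichman x) (hy : SatisfiesLinearRelations ℚ x y) {ε : ℝ}
    (h01 : x + ε • (y - x) ∈ Set.Icc 0 1)
    (hord : ∀ u v, x u ≤ x v → (x + ε • (y - x)) u ≤ (x + ε • (y - x)) v) :
    G.IsRichman (x + ε • (y - x)) := by
  set z := x + ε • (y - x)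
  have hz : ∀ p, z p = x p + ε * (y p - x p) := fun _ => rfl
  refine isRichman_iff.2 ⟨h01, funext fun p => ?_⟩
  cases h : G.terminal p
  · obtain ⟨w, hw, hxw⟩ := exists_mem_eq_sup' (G.Wne p h) x
    obtain ⟨b, hb, hxb⟩ := exists_mem_eq_inf' (G.Bne p h) x
    have hzw : (G.W p).sup' (G.Wne p h) z = z w :=
      le_antisymm (sup'_le _ _ fun u hu => hord u w (hxw ▸ le_sup' x hu)) (le_sup' z hw)
    have hzb : (G.B p).inf' (G.Bne p h) z = z b :=
      le_antisymm (inf'_le z hb) (le_inf' _ _ fun u hu => hord b u (hxb ▸ inf'_le x hu))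
    have hxp : x p = (x w + x b) / 2 := by rw [hx.2.2 p h, hxw, hxb]
    have hyp : y p = (y w + y b) / 2 := by
      have := hy.three_term p w b 2 (-1) (-1) 0 (by simp [Rat.smul_def, hxp]; ring)
      simp only [Rat.smul_def, map_zero] at this
      push_cast at this
      linarith
    rw [step_of_not_terminal z h, hzw, hzb, hz, hz, hz, hxp, hyp]
    ring
  · have hyx : y p = x p := by
      rcases G.tval01 p h with h0 | h1
      · rw [hx.2.1 p h, h0]
        simpa using hy.apply_eq_algebraMap (c := 0) (by simp [hx.2.1 p h, h0])
      · rw [hx.2.1 p h, h1]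
        simpa using hy.apply_eq_algebraMap (c := 1) (by simp [hx.2.1 p h, h1])
    rw [step_of_terminal z h, hz, hyx, sub_self, mul_zero, add_zero, hx.2.1 p h]

lemma IsRichman.eventually_isRichman_add_smul_sub (hx : G.IsRichman x)
    (hy : SatisfiesLinearRelations ℚ x y) :
    ∀ᶠ ε in 𝓝 (0 : ℝ), G.IsRichman (x + ε • (y - x)) := by
  have hz : ∀ (ε : ℝ) p, (x + ε • (y - x)) p = x p + ε * (y p - x p) := fun _ _ => rfl
  have hord : ∀ᶠ ε in 𝓝 (0 : ℝ),
      ∀ u v, x u ≤ x v → (x + ε • (y - x)) u ≤ (x + ε • (y - x)) v := by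
    simp only [eventually_all, hz]
    exact fun u v huv => eventually_add_mul_le huv fun h => by rw [h, hy.apply_eq_apply h]
  have hlow : ∀ᶠ ε in 𝓝 (0 : ℝ), ∀ p, 0 ≤ (x + ε • (y - x)) p := by
    simp only [eventually_all, hz]
    intro p
    simpa using eventually_add_mul_le (c := 0) (hx.1 p).1 fun h => by
      rw [← h, hy.apply_eq_algebraMap (c := 0) (by simpa using h.symm)]; simp
  have hup : ∀ᶠ ε in 𝓝 (0 : ℝ), ∀ p, (x + ε • (y - x)) p ≤ 1 := by
    simp only [eventually_all, hz]
    intro p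
    simpa using eventually_add_mul_le (d := 0) (hx.1 p).2 fun h => by
      rw [h, hy.apply_eq_algebraMap (c := 1) (by simpa using h)]; simp
  filter_upwards [hord, hlow, hup] with ε h1 h2 h3 using hx.add_smul_sub hy ⟨h2, h3⟩ h1

theorem eq_of_satisfiesLinearRelations
    (hx : IsLeast {x | G.IsRichman x} x ∨ IsGreatest {x | G.IsRichman x} x)
    (hy : SatisfiesLinearRelations ℚ x y) : y = x := by
  have h := (hx.elim (·.1) (·.1) : G.IsRichman x).eventually_isRichman_add_smul_sub hy
  obtain ⟨ε, hε, hpos, hneg⟩ : ∃ ε : ℝ, 0 < ε ∧ G.IsRichman (x + ε • (y - x)) ∧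
      G.IsRichman (x + (-ε) • (y - x)) :=
    (eventually_mem_nhdsWithin.and ((h.and ((continuous_neg.tendsto' 0 0 neg_zero).eventually h)
      ).filter_mono nhdsWithin_le_nhds)).exists (f := 𝓝[>] 0)
  funext p
  have hd : ε * (y p - x p) = 0 := by
    rcases hx with hx | hx <;>
    · have h1 := hx.2 hpos p
      have h2 := hx.2 hneg p
      simp only [Pi.add_apply, Pi.smul_apply, Pi.sub_apply, smul_eq_mul] at h1 h2
      linarith
  linarith [(mul_eq_zero.1 hd).resolve_left hε.ne']

end Rigidity

end GameGraph

/-- the limit values `α(P)` and `β(P)` are rational. -/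
theorem alphaLim_betaLim_rational (G : GameGraph P) (p : P) :
    (∃ q : ℚ, (q : ℝ) = G.alphaLim p) ∧ (∃ q : ℚ, (q : ℝ) = G.betaLim p) := by
  have hrat : ∀ x, IsLeast {x | G.IsRichman x} x ∨ IsGreatest {x | G.IsRichman x} x →
      ∃ q : ℚ, (q : ℝ) = x p := fun _ hx =>
    mem_range_algebraMap_of_satisfiesLinearRelations
      (fun _ hy => GameGraph.eq_of_satisfiesLinearRelations hx hy) p
  exact ⟨hrat _ (Or.inl G.isLeast_alphaLim), hrat _ (Or.inr G.isGreatest_betaLim)⟩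
end

section
/- In a finite game graph with a Richman function x, suppose White plays an x-greedy strategy (always moving to a White option maximizing x) in the random-turn game where each move is made by White or Black with probability 1/2 independently, with terminal positions absorbing. Then for every n, the expected value E[x(P_n)] of x at the position after n moves satisfies E[x(P_n)] ≥ x(P_0), regardless of Black's strategy. In particular, the probability that Black has won (reached a terminal position of value 0) within n moves is at most 1 − x(P_0). -/
open Finset

variable {P : Type} [Fintype P] [DecidableEq P]

open MeasureTheory ProbabilityTheory

/-!
Let `g(p) = max_w x(P_w) - x(p)` at a non-terminal position `p` and `g(p) = 0` at a terminal one.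
The Richman equation says that also `x(p) - min_b x(P_b) = g(p)`, so a greedy White move raises
`x` by exactly `g(p)` and any Black move lowers it by at most `g(p)`: under greedy play
`x(P_{n+1}) ≥ x(P_n) ± g(P_n)`, the sign being the `n`-th coin. Since `P_n` is a function of the
first `n` coins, the `n`-th coin is independent of `g(P_n)` and the signed term has mean zero, so
`E[x(P_n)]` is nondecreasing. As `x ≤ 1` everywhere and `x = 0` on Black's terminal wins,
`P(Black has won by time n) ≤ 1 - E[x(P_n)] ≤ 1 - x(P_0)`.
-/

def coinSign (b : Bool) : ℝ := if b then 1 else -1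

lemma norm_coinSign_le (b : Bool) : ‖coinSign b‖ ≤ 1 := by
  cases b <;> simp [coinSign]

section

variable {Ω : Type*} [MeasurableSpace Ω] {μ : Measure Ω} {C : ℕ → Ω → Bool}

def coinPrefix (C : ℕ → Ω → Bool) (n : ℕ) (ω : Ω) : Fin n → Bool := fun i => C i ω

def DeterminedByCoins {α : Type*} (C : ℕ → Ω → Bool) (n : ℕ) (Y : Ω → α) : Prop :=
  ∃ f : (Fin n → Bool) → α, ∀ ω, Y ω = f (coinPrefix C n ω)

lemma measurable_coinPrefix (hC : ∀ n, Measurable (C n)) (n : ℕ) :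
    Measurable (coinPrefix C n) :=
  measurable_pi_lambda _ fun i => hC i

lemma indepFun_coin_coinPrefix (hC : ∀ n, Measurable (C n)) (hCindep : iIndepFun C μ)
    (n : ℕ) : IndepFun (C n) (coinPrefix C n) μ := by
  have hφ : Measurable fun c : ({n} : Finset ℕ) → Bool => c ⟨n, mem_singleton_self n⟩ :=
    measurable_pi_apply _
  have hψ : Measurable fun (c : range n → Bool) (i : Fin n) => c ⟨i, mem_range.2 i.isLt⟩ :=
    measurable_pi_lambda _ fun _ => measurable_pi_apply _
  exact (hCindep.indepFun_finset {n} (range n) (by simp) hC).comp hφ hψ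

lemma integral_coinSign [IsProbabilityMeasure μ] (hC : ∀ n, Measurable (C n))
    (hCfair : ∀ n, μ (C n ⁻¹' {true}) = 1 / 2) (n : ℕ) :
    ∫ ω, coinSign (C n ω) ∂μ = 0 := by
  have htrue : μ.real (C n ⁻¹' {true}) = 1 / 2 := by simp [measureReal_def, hCfair]
  have hfalse : μ.real (C n ⁻¹' {false}) = 1 / 2 := by
    rw [show C n ⁻¹' {false} = (C n ⁻¹' {true})ᶜ by ext; simp,
      probReal_compl_eq_one_sub (hC n (measurableSet_singleton _)), htrue]
    norm_num
  rw [← integral_map (hC n).aemeasurable (measurable_of_countable _).aestronglyMeasurable,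
    integral_fintype .of_finite]
  simp [map_measureReal_apply (hC n) (measurableSet_singleton _), htrue, hfalse, coinSign]

namespace DeterminedByCoins

variable {α : Type*} {n : ℕ} {Y : Ω → α}

lemma integrable_comp [IsFiniteMeasure μ] (hC : ∀ n, Measurable (C n))
    (hY : DeterminedByCoins C n Y) (g : α → ℝ) : Integrable (fun ω => g (Y ω)) μ := by
  obtain ⟨f, hf⟩ := hY
  obtain rfl : Y = f ∘ coinPrefix C n := funext hf
  exact (Integrable.of_finite (f := g ∘ f)).comp_measurable (measurable_coinPrefix hC n)

lemma measurableSet_preimage (hC : ∀ n, Measurable (C n)) (hY : DeterminedByCoins C n Y)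
    (S : Set α) : MeasurableSet (Y ⁻¹' S) := by
  obtain ⟨f, hf⟩ := hY
  obtain rfl : Y = f ∘ coinPrefix C n := funext hf
  exact measurable_coinPrefix hC n (MeasurableSet.of_discrete (s := f ⁻¹' S))

lemma integral_coinSign_mul_comp [IsProbabilityMeasure μ] (hC : ∀ n, Measurable (C n))
    (hCindep : iIndepFun C μ) (hCfair : ∀ n, μ (C n ⁻¹' {true}) = 1 / 2)
    (hY : DeterminedByCoins C n Y) (g : α → ℝ) :
    ∫ ω, coinSign (C n ω) * g (Y ω) ∂μ = 0 := by
  obtain ⟨f, hf⟩ := hY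
  obtain rfl : Y = f ∘ coinPrefix C n := funext hf
  refine ((indepFun_coin_coinPrefix hC hCindep n).integral_fun_comp_mul_comp (f := coinSign)
    (g := g ∘ f) (hC n).aemeasurable (measurable_coinPrefix hC n).aemeasurable
    (measurable_of_countable _).aestronglyMeasurable
    (measurable_of_countable _).aestronglyMeasurable).trans ?_
  rw [integral_coinSign hC hCfair, zero_mul]

end DeterminedByCoins

lemma measure_le_ofReal_one_sub_integral [IsProbabilityMeasure μ] {f : Ω → ℝ}
    (hf : Integrable f μ) (hf_le_one : ∀ ω, f ω ≤ 1) {A : Set Ω} (hA : MeasurableSet A)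
    (hf_nonpos : ∀ ω ∈ A, f ω ≤ 0) : μ A ≤ ENNReal.ofReal (1 - ∫ ω, f ω ∂μ) := by
  have hle : ∫ ω, f ω ∂μ ≤ μ.real Aᶜ := by
    rw [← integral_indicator_one hA.compl]
    refine integral_mono hf ((integrable_const 1).indicator hA.compl) fun ω => ?_
    by_cases hω : ω ∈ A <;> simp [hω, hf_nonpos, hf_le_one]
  rw [probReal_compl_eq_one_sub hA] at hle
  rw [← ofReal_measureReal]
  exact ENNReal.ofReal_le_ofReal (by linarith)

end

noncomputable def GameGraph.greedyGain (G : GameGraph P) (x : P → ℝ) (p : P) : ℝ :=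
  if h : G.terminal p = false then (G.W p).sup' (G.Wne p h) x - x p else 0

lemma GameGraph.IsRichman.add_coinSign_mul_greedyGain_le {G : GameGraph P} {x : P → ℝ}
    (hx : G.IsRichman x) {p q : P} {b : Bool} (habs : G.terminal p = true → q = p)
    (hwhite : ∀ h : G.terminal p = false, b = true → x q = (G.W p).sup' (G.Wne p h) x)
    (hblack : G.terminal p = false → b = false → q ∈ G.B p) :
    x p + coinSign b * G.greedyGain x p ≤ x q := by
  cases hp : G.terminal p with
  | true => simp [GameGraph.greedyGain, hp, habs hp]
  | false =>
    have hgain : G.greedyGain x p = (G.W p).sup' (G.Wne p hp) x - x p := dif_pos hp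
    cases b with
    | true => simp [hgain, coinSign, hwhite hp rfl]
    | false =>
      have hmean := hx.2.2 p hp
      have hinf := inf'_le x (hblack hp rfl)
      simp only [hgain, coinSign, Bool.false_eq_true, if_false]
      linarith

lemma integral_comp_le_integral_comp_succ {G : GameGraph P} {x : P → ℝ} (hx : G.IsRichman x)
    {Ω : Type*} [MeasurableSpace Ω] {μ : Measure Ω} [IsProbabilityMeasure μ]
    {C : ℕ → Ω → Bool} (hC : ∀ n, Measurable (C n)) (hCindep : iIndepFun C μ)
    (hCfair : ∀ n, μ (C n ⁻¹' {true}) = 1 / 2)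
    {Pos : ℕ → Ω → P} (hAdapted : ∀ n, DeterminedByCoins C n (Pos n))
    (habs : ∀ n ω, G.terminal (Pos n ω) = true → Pos (n + 1) ω = Pos n ω)
    (hWgreedy : ∀ n ω, ∀ h : G.terminal (Pos n ω) = false, C n ω = true →
      x (Pos (n + 1) ω) = (G.W (Pos n ω)).sup' (G.Wne _ h) x)
    (hBmove : ∀ n ω, G.terminal (Pos n ω) = false → C n ω = false →
      Pos (n + 1) ω ∈ G.B (Pos n ω)) (n : ℕ) :
    ∫ ω, x (Pos n ω) ∂μ ≤ ∫ ω, x (Pos (n + 1) ω) ∂μ := by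
  have hstep : ∀ ω, x (Pos n ω) + coinSign (C n ω) * G.greedyGain x (Pos n ω)
      ≤ x (Pos (n + 1) ω) := fun ω =>
    hx.add_coinSign_mul_greedyGain_le (habs n ω) (hWgreedy n ω) (hBmove n ω)
  have hint : ∀ m, Integrable (fun ω => x (Pos m ω)) μ := fun m =>
    (hAdapted m).integrable_comp hC x
  have hint_noise : Integrable (fun ω => coinSign (C n ω) * G.greedyGain x (Pos n ω)) μ :=
    ((hAdapted n).integrable_comp hC _).bdd_mul
      (measurable_of_countable coinSign |>.comp (hC n)).aestronglyMeasurable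
      (.of_forall fun ω => norm_coinSign_le _)
  calc ∫ ω, x (Pos n ω) ∂μ
      = ∫ ω, x (Pos n ω) + coinSign (C n ω) * G.greedyGain x (Pos n ω) ∂μ := by
        rw [integral_add (hint n) hint_noise,
          (hAdapted n).integral_coinSign_mul_comp hC hCindep hCfair, add_zero]
    _ ≤ ∫ ω, x (Pos (n + 1) ω) ∂μ := integral_mono ((hint n).add hint_noise) (hint _) hstep

/-- in random-turn play where White plays `x`-greedily (for a
Richman function `x`), moves are decided by i.i.d. fair coins, and terminal
positions are absorbing, the expectation `E[x(P_n)]` is at least `x(P_0)` for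
every `n`, regardless of Black's strategy; in particular the probability that
Black has won within `n` moves is at most `1 − x(P_0)`. -/
theorem greedy_submartingale (G : GameGraph P) (x : P → ℝ) (hx : G.IsRichman x)
    {Ω : Type} [MeasurableSpace Ω] (μ : Measure Ω) [IsProbabilityMeasure μ]
    (C : ℕ → Ω → Bool) (hCmeas : ∀ n, Measurable (C n))
    (hCindep : iIndepFun C μ)
    (hCfair : ∀ n, μ (C n ⁻¹' {true}) = 1 / 2)
    (Pos : ℕ → Ω → P) (p0 : P) (hPos0 : ∀ ω, Pos 0 ω = p0)
    (hAdapted : ∀ n, ∃ f : (Fin n → Bool) → P, ∀ ω, Pos n ω = f fun i => C i ω)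
    (habs : ∀ n ω, G.terminal (Pos n ω) = true → Pos (n + 1) ω = Pos n ω)
    (hWgreedy : ∀ n ω, ∀ h : G.terminal (Pos n ω) = false, C n ω = true →
      Pos (n + 1) ω ∈ G.W (Pos n ω) ∧
      x (Pos (n + 1) ω) = (G.W (Pos n ω)).sup' (G.Wne _ h) x)
    (hBmove : ∀ n ω, G.terminal (Pos n ω) = false → C n ω = false →
      Pos (n + 1) ω ∈ G.B (Pos n ω)) :
    (∀ n, x p0 ≤ ∫ ω, x (Pos n ω) ∂μ) ∧
    (∀ n, μ {ω | G.terminal (Pos n ω) = true ∧ G.tval (Pos n ω) = 0}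
        ≤ ENNReal.ofReal (1 - x p0)) := by
  have hmono : Monotone fun n => ∫ ω, x (Pos n ω) ∂μ :=
    monotone_nat_of_le_succ <| integral_comp_le_integral_comp_succ hx hCmeas hCindep hCfair
      hAdapted habs (fun n ω h hc => (hWgreedy n ω h hc).2) hBmove
  have hmean : ∀ n, x p0 ≤ ∫ ω, x (Pos n ω) ∂μ := fun n => by
    simpa [hPos0] using hmono n.zero_le
  refine ⟨hmean, fun n => ?_⟩
  have hblack_win : MeasurableSet {ω | G.terminal (Pos n ω) = true ∧ G.tval (Pos n ω) = 0} :=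
    DeterminedByCoins.measurableSet_preimage hCmeas (hAdapted n)
      {p | G.terminal p = true ∧ G.tval p = 0}
  refine (measure_le_ofReal_one_sub_integral (DeterminedByCoins.integrable_comp hCmeas
    (hAdapted n) x)
    (fun ω => (hx.1 _).2) hblack_win fun ω hω => ?_).trans
    (ENNReal.ofReal_le_ofReal (by linarith [hmean n]))
  rw [hx.2.1 _ hω.1, hω.2]
end

section
/- With the sets T_n defined as above and T = ∪_n T_n, suppose White plays x-greedily and, whenever an x-greedy move into T exists, moves into T_i with minimal index i. Then from any position in T_n, the probability (over fair coin flips deciding who moves) that a terminal position is reached within the next n moves is at least 2^{−n}. Consequently, with probability 1, no position of T is visited infinitely often. -/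
open Finset

variable {P : Type} [Fintype P] [DecidableEq P]

/-- The sets `T_n`: `T_0` is the set of terminal positions, and `T_{n+1}` consists
of positions in `T_n`, positions with an `x`-greedy White option in `T_n`, and
positions all of whose Black options lie in `T_n`. -/
def GameGraph.Tset (G : GameGraph P) (x : P → ℝ) : ℕ → Set P
  | 0 => {p | G.terminal p = true}
  | n+1 => G.Tset x n ∪
      {p | ∃ h : G.terminal p = false, ∃ w ∈ G.W p,
        w ∈ G.Tset x n ∧ x w = (G.W p).sup' (G.Wne p h) x} ∪
      {p | ∀ b ∈ G.B p, b ∈ G.Tset x n}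

open MeasureTheory ProbabilityTheory

open scoped ENNReal

/-!
From a position in `T (i + 1)` one outcome of the coin forces the next position into `T i`:
White's, if White has an `x`-greedy option in the first level `T i` not containing the position
(a move into the lowest level then lands in `T i`), and Black's otherwise (then all Black
options lie in `T i`). Following these outcomes for `n` flips leads from `T n` to a terminal
position; whatever happened before, this has probability `2⁻¹ ^ n`.

If `p` is non-terminal and `T (i + 1)` is the first level containing `p`, the descent started
at a visit to `p` stays in `T i` and never returns to `p`. So each further visit to `p` has
conditional probability at most `1 - 2⁻¹ ^ (i + 1)`, and the probability of `k` visits decays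
geometrically.
-/

section CoinFlips

variable {Ω : Type*} {mΩ : MeasurableSpace Ω} {μ : Measure Ω} {C : ℕ → Ω → Bool}

lemma measure_preimage_bool_of_fair [IsProbabilityMeasure μ] {c : Ω → Bool} (hc : Measurable c)
    (hfair : μ (c ⁻¹' {true}) = 1 / 2) (b : Bool) : μ (c ⁻¹' {b}) = 2⁻¹ := by
  cases b
  · rw [show c ⁻¹' {false} = (c ⁻¹' {true})ᶜ by ext; simp,
      prob_compl_eq_one_sub (hc (measurableSet_singleton _)), hfair, one_div,
      ENNReal.one_sub_inv_two]
  · rw [hfair, one_div]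

variable (C) in
def coinFiltration (hC : ∀ n, Measurable (C n)) : Filtration ℕ mΩ where
  seq n := ⨆ i ∈ Set.Iio n, MeasurableSpace.comap (C i) inferInstance
  mono' _ _ hmn := biSup_mono fun _ hi => lt_of_lt_of_le hi hmn
  le' _ := iSup₂_le fun i _ => (hC i).comap_le

variable {hC : ∀ n, Measurable (C n)}

lemma measurable_coinFiltration_of_lt {i n : ℕ} (hin : i < n) :
    Measurable[coinFiltration C hC n] (C i) :=
  Measurable.of_comap_le <|
    le_iSup₂ (f := fun i (_ : i ∈ Set.Iio n) => MeasurableSpace.comap (C i) inferInstance) i hin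

lemma measurableSet_coinFiltration_preimage {α : Type*} {n : ℕ} {X : Ω → α}
    (hX : ∃ f : (Fin n → Bool) → α, ∀ ω, X ω = f fun i => C i ω) (S : Set α) :
    MeasurableSet[coinFiltration C hC n] (X ⁻¹' S) := by
  obtain ⟨f, hf⟩ := hX
  have hprefix : Measurable[coinFiltration C hC n] fun ω (i : Fin n) => C i ω :=
    @measurable_pi_lambda _ _ _ (coinFiltration C hC n) _ _
      fun i => measurable_coinFiltration_of_lt i.2
  obtain rfl : X = f ∘ fun ω i => C i ω := funext hf
  exact hprefix (.of_discrete : MeasurableSet (f ⁻¹' S))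

lemma indep_coinFiltration_comap (hind : iIndepFun C μ) (n : ℕ) :
    Indep (coinFiltration C hC n) (MeasurableSpace.comap (C n) inferInstance) μ := by
  have h := indep_iSup_of_disjoint (fun i => (hC i).comap_le)
    ((iIndepFun_iff_iIndep _ _ _).mp hind) (S := Set.Iio n) (T := {n}) (by simp)
  rwa [_root_.iSup_singleton] at h

lemma measure_inter_setOf_coin_eq [IsProbabilityMeasure μ] (hind : iIndepFun C μ) {n : ℕ}
    (hfair : μ (C n ⁻¹' {true}) = 1 / 2) {B : Set Ω} {h : Ω → Bool}
    (hB : MeasurableSet[coinFiltration C hC n] B) (hh : Measurable[coinFiltration C hC n] h) :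
    μ (B ∩ {ω | C n ω = h ω}) = 2⁻¹ * μ B := by
  have hslice : ∀ b, MeasurableSet[coinFiltration C hC n] (B ∩ h ⁻¹' {b}) :=
    fun b => hB.inter (hh (measurableSet_singleton b))
  have hmeas : ∀ b, MeasurableSet (B ∩ h ⁻¹' {b}) :=
    fun b => (coinFiltration C hC).le n _ (hslice b)
  have hcoin : ∀ b, μ (B ∩ h ⁻¹' {b} ∩ C n ⁻¹' {b}) = 2⁻¹ * μ (B ∩ h ⁻¹' {b}) := fun b => by
    rw [(Indep_iff _ _ _).mp (indep_coinFiltration_comap hind n) _ _ (hslice b)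
      ⟨{b}, measurableSet_singleton b, rfl⟩, measure_preimage_bool_of_fair (hC n) hfair, mul_comm]
  have hdisj : ∀ s t : Set Ω, Disjoint (B ∩ h ⁻¹' {true} ∩ s) (B ∩ h ⁻¹' {false} ∩ t) :=
    fun s t => Set.disjoint_left.mpr fun ω h1 h2 => by simp_all
  have hsplit : B ∩ {ω | C n ω = h ω} =
      B ∩ h ⁻¹' {true} ∩ C n ⁻¹' {true} ∪ B ∩ h ⁻¹' {false} ∩ C n ⁻¹' {false} := by
    ext ω; cases hω : h ω <;> simp [hω]
  have hB' : B = B ∩ h ⁻¹' {true} ∩ Set.univ ∪ B ∩ h ⁻¹' {false} ∩ Set.univ := by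
    ext ω; cases hω : h ω <;> simp [hω]
  rw [hsplit, measure_union (hdisj _ _) ((hmeas false).inter ((hC n) (measurableSet_singleton _))),
    hcoin, hcoin, ← mul_add]
  conv_rhs => rw [hB', measure_union (hdisj _ _) ((hmeas false).inter .univ)]
  simp only [Set.inter_univ]

lemma measurableSet_setOf_forall_coin_eq {h : ℕ → Ω → Bool}
    (hh : ∀ n, Measurable[coinFiltration C hC n] (h n)) (m r : ℕ) :
    MeasurableSet[coinFiltration C hC (m + r)] {ω | ∀ k < r, C (m + k) ω = h (m + k) ω} := by
  simp only [Set.ofPred_forall]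
  refine .iInter fun k => .iInter fun hk =>
    (coinFiltration C hC).mono (by omega : m + k + 1 ≤ m + r) _ ?_
  exact measurableSet_eq_fun (measurable_coinFiltration_of_lt (Nat.lt_succ_self _))
    ((hh _).mono ((coinFiltration C hC).mono (Nat.le_succ _)) le_rfl)

lemma measure_inter_setOf_forall_coin_eq [IsProbabilityMeasure μ] (hind : iIndepFun C μ)
    (hfair : ∀ n, μ (C n ⁻¹' {true}) = 1 / 2) {h : ℕ → Ω → Bool}
    (hh : ∀ n, Measurable[coinFiltration C hC n] (h n)) {m : ℕ} {B : Set Ω}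
    (hB : MeasurableSet[coinFiltration C hC m] B) (r : ℕ) :
    μ (B ∩ {ω | ∀ k < r, C (m + k) ω = h (m + k) ω}) = 2⁻¹ ^ r * μ B := by
  induction r with
  | zero => simp
  | succ r ih =>
    have hsucc : B ∩ {ω | ∀ k < r + 1, C (m + k) ω = h (m + k) ω} =
        B ∩ {ω | ∀ k < r, C (m + k) ω = h (m + k) ω} ∩ {ω | C (m + r) ω = h (m + r) ω} := by
      ext ω
      simp only [Set.mem_inter_iff, Set.mem_ofPred_eq, Nat.lt_succ_iff_lt_or_eq, or_imp,
        forall_and, forall_eq, and_assoc]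
    rw [hsucc, measure_inter_setOf_coin_eq hind (hfair _)
      ((((coinFiltration C hC).mono (Nat.le_add_right m r)) _ hB).inter
        (measurableSet_setOf_forall_coin_eq hh m r)) (hh _), ih, pow_succ', mul_assoc]

end CoinFlips

section Visits

variable {Ω : Type*} {V : ℕ → Set Ω}

-- `k` counts the earlier visits: this is the `(k + 1)`-st visit to `V`, made at time `m`.
open Classical in
def nthVisitAt (V : ℕ → Set Ω) (k m : ℕ) : Set Ω :=
  {ω | ω ∈ V m ∧ Nat.count (fun l => ω ∈ V l) m = k}

lemma measurableSet_nthVisitAt {mΩ : MeasurableSpace Ω} {ℱ : Filtration ℕ mΩ}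
    (hV : ∀ n, MeasurableSet[ℱ n] (V n)) (k m : ℕ) : MeasurableSet[ℱ m] (nthVisitAt V k m) := by
  classical
  have hcount : ∀ m, Measurable[ℱ m] fun ω => Nat.count (fun l => ω ∈ V l) m := by
    intro m
    induction m with
    | zero => simp only [Nat.count_zero]; exact measurable_const
    | succ m ih =>
      simp only [Nat.count_succ]
      exact (ih.mono (ℱ.mono m.le_succ) le_rfl).add
        (Measurable.ite (ℱ.mono m.le_succ _ (hV m)) measurable_const measurable_const)
  exact (hV m).inter (hcount m (measurableSet_singleton k))

lemma pairwise_disjoint_nthVisitAt (k : ℕ) :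
    Pairwise (Function.onFun Disjoint (nthVisitAt V k)) := by
  classical
  exact fun _ _ hne => Set.disjoint_left.mpr fun _ h h' =>
    hne (Nat.count_injective h.1 h'.1 (h.2.trans h'.2.symm))

lemma setOf_infinite_subset_iUnion_nthVisitAt (k : ℕ) :
    {ω | {n | ω ∈ V n}.Infinite} ⊆ ⋃ m, nthVisitAt V k m := by
  classical
  exact fun _ hω => Set.mem_iUnion.mpr
    ⟨_, Nat.nth_mem_of_infinite hω k, Nat.count_nth_of_infinite hω k⟩

lemma iUnion_nthVisitAt_succ_subset (k : ℕ) :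
    ⋃ m, nthVisitAt V (k + 1) m ⊆ ⋃ m, nthVisitAt V k m := by
  classical
  simp only [Set.iUnion_subset_iff]
  intro m ω ⟨hm, hcount⟩
  have hk : ∀ hf : (Set.ofPred fun l => ω ∈ V l).Finite, k < hf.toFinset.card := fun hf => by
    have := Nat.count_le_card hf (m + 1)
    rw [Nat.count_succ, if_pos hm] at this
    omega
  exact Set.mem_iUnion.mpr ⟨_, Nat.nth_mem k hk, Nat.count_nth hk⟩

lemma disjoint_nthVisitAt_inter_iUnion_nthVisitAt_succ {E : ℕ → Set Ω}
    (hesc : ∀ m n, m < n → Disjoint (V m ∩ E m) (V n)) (k m : ℕ) :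
    Disjoint (nthVisitAt V k m ∩ E m) (⋃ m', nthVisitAt V (k + 1) m') := by
  classical
  refine Set.disjoint_left.mpr fun ω ⟨⟨hm, hcount⟩, hE⟩ hω => ?_
  obtain ⟨m', hm', hcount'⟩ := Set.mem_iUnion.mp hω
  rcases lt_or_ge m m' with hlt | hle
  · exact Set.disjoint_left.mp (hesc m m' hlt) ⟨hm, hE⟩ hm'
  · have := Nat.count_monotone (fun l => ω ∈ V l) hle
    omega

open Filter Topology in
theorem measure_setOf_infinite_eq_zero_of_escape {mΩ : MeasurableSpace Ω} {μ : Measure Ω}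
    [IsFiniteMeasure μ] {ℱ : Filtration ℕ mΩ} (hV : ∀ n, MeasurableSet[ℱ n] (V n))
    {E : ℕ → Set Ω} {q : ℝ≥0∞} (hq : q ≠ 0)
    (hE : ∀ n B, MeasurableSet[ℱ n] B → q * μ B ≤ μ (B ∩ E n))
    (hesc : ∀ m n, m < n → Disjoint (V m ∩ E m) (V n)) :
    μ {ω | {n | ω ∈ V n}.Infinite} = 0 := by
  set A := nthVisitAt V
  set W := fun k => ⋃ m, A k m
  have hA : ∀ k m, MeasurableSet (A k m) :=
    fun k m => ℱ.le m _ (measurableSet_nthVisitAt hV k m)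
  have hslice : ∀ k m, μ (A k m ∩ W (k + 1)) ≤ (1 - q) * μ (A k m) := by
    intro k m
    have hdisj : Disjoint (A k m ∩ E m) (A k m ∩ W (k + 1)) :=
      (disjoint_nthVisitAt_inter_iUnion_nthVisitAt_succ hesc k m).mono_right
        Set.inter_subset_right
    have hunion := measure_union (μ := μ) hdisj ((hA k m).inter (.iUnion (hA (k + 1))))
    calc μ (A k m ∩ W (k + 1)) ≤ μ (A k m) - μ (A k m ∩ E m) :=
          ENNReal.le_sub_of_add_le_left (measure_ne_top _ _) <| hunion ▸
            measure_mono (Set.union_subset Set.inter_subset_left Set.inter_subset_left)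
      _ ≤ μ (A k m) - q * μ (A k m) :=
          tsub_le_tsub_left (hE m _ (measurableSet_nthVisitAt hV k m)) _
      _ = (1 - q) * μ (A k m) := by
          rw [ENNReal.sub_mul fun _ _ => measure_ne_top _ _, one_mul]
  have hstep : ∀ k, μ (W (k + 1)) ≤ (1 - q) * μ (W k) := fun k =>
    calc μ (W (k + 1)) = μ (⋃ m, A k m ∩ W (k + 1)) := by
          rw [← Set.iUnion_inter, Set.inter_eq_right.mpr (iUnion_nthVisitAt_succ_subset k)]
      _ ≤ ∑' m, μ (A k m ∩ W (k + 1)) := measure_iUnion_le _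
      _ ≤ ∑' m, (1 - q) * μ (A k m) := ENNReal.tsum_le_tsum (hslice k)
      _ = (1 - q) * μ (W k) := by
          rw [ENNReal.tsum_mul_left, measure_iUnion (pairwise_disjoint_nthVisitAt k) (hA k)]
  have hdecay : ∀ k, μ (W k) ≤ (1 - q) ^ k * μ Set.univ := by
    intro k
    induction k with
    | zero => simpa using measure_mono (Set.subset_univ _)
    | succ k ih =>
      calc μ (W (k + 1)) ≤ (1 - q) * μ (W k) := hstep k
        _ ≤ (1 - q) * ((1 - q) ^ k * μ Set.univ) := by gcongr
        _ = (1 - q) ^ (k + 1) * μ Set.univ := by rw [pow_succ', mul_assoc]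
  have hlim : Tendsto (fun k => (1 - q) ^ k * μ Set.univ) atTop (𝓝 0) := by
    simpa using ENNReal.Tendsto.mul_const (ENNReal.tendsto_pow_atTop_nhds_zero_of_lt_one
      (ENNReal.sub_lt_self ENNReal.one_ne_top one_ne_zero hq)) (.inr (measure_ne_top μ _))
  exact le_antisymm (ge_of_tendsto' hlim fun k =>
    (measure_mono (setOf_infinite_subset_iUnion_nthVisitAt k)).trans (hdecay k)) bot_le

end Visits

namespace GameGraph

variable (G : GameGraph P) (x : P → ℝ)

def HasGreedyOptionIn (p : P) (S : Set P) : Prop :=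
  ∃ h : G.terminal p = false, ∃ w ∈ G.W p, w ∈ S ∧ x w = (G.W p).sup' (G.Wne p h) x

/-- One move of the play from `a` to `b` when the coin shows `c` (`true`: White moves). The
second clause is White's rule of moving into the `T i` of least index reachable greedily. -/
def IsPlayStep (a : P) (c : Bool) (b : P) : Prop :=
  (G.terminal a = true → b = a) ∧
  (c = true → ∀ i, G.HasGreedyOptionIn x a (G.Tset x i) → b ∈ G.Tset x i) ∧
  (G.terminal a = false → c = false → b ∈ G.B a)

open Classical in
noncomputable def descentCoin (p : P) : Bool :=
  decide (∃ i, p ∉ G.Tset x i ∧ G.HasGreedyOptionIn x p (G.Tset x i))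

variable {G x}

lemma mem_Tset_zero {p : P} : p ∈ G.Tset x 0 ↔ G.terminal p = true := Iff.rfl

lemma mem_Tset_succ {p : P} {n : ℕ} : p ∈ G.Tset x (n + 1) ↔
    p ∈ G.Tset x n ∨ G.HasGreedyOptionIn x p (G.Tset x n) ∨ ∀ b ∈ G.B p, b ∈ G.Tset x n := by
  simp only [Tset, HasGreedyOptionIn, Set.mem_union, or_assoc]
  rfl

variable (G x) in
lemma Tset_mono : Monotone (G.Tset x) :=
  monotone_nat_of_le_succ fun _ _ hp => mem_Tset_succ.mpr (.inl hp)

lemma exists_mem_Tset_succ_notMem {p : P} (hp : G.terminal p = false) {j : ℕ}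
    (hj : p ∈ G.Tset x (j + 1)) : ∃ i ≤ j, p ∈ G.Tset x (i + 1) ∧ p ∉ G.Tset x i := by
  induction j with
  | zero => exact ⟨0, le_rfl, hj, by simp [mem_Tset_zero, hp]⟩
  | succ j ih =>
    by_cases h : p ∈ G.Tset x (j + 1)
    · obtain ⟨i, hij, hi⟩ := ih h
      exact ⟨i, hij.trans j.le_succ, hi⟩
    · exact ⟨j + 1, le_rfl, hj, h⟩

lemma IsPlayStep.mem_Tset {a b : P} {c : Bool} (hab : G.IsPlayStep x a c b) {j : ℕ}
    (ha : a ∈ G.Tset x (j + 1)) (hc : c = G.descentCoin x a) : b ∈ G.Tset x j := by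
  obtain ⟨habs, hwhite, hblack⟩ := hab
  cases hterm : G.terminal a
  · cases hcoin : G.descentCoin x a
    · obtain ⟨i, hij, hai, hai'⟩ := exists_mem_Tset_succ_notMem hterm ha
      have hgreedy : ¬ G.HasGreedyOptionIn x a (G.Tset x i) := fun hg => by
        have : ∃ i, a ∉ G.Tset x i ∧ G.HasGreedyOptionIn x a (G.Tset x i) := ⟨i, hai', hg⟩
        simp [descentCoin, this] at hcoin
      obtain (h | h | h) := mem_Tset_succ.mp hai
      · exact absurd h hai'
      · exact absurd h hgreedy
      · exact Tset_mono G x hij (h b (hblack hterm (hc.trans hcoin)))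
    · obtain ⟨i, hai, hgreedy⟩ := by simpa [descentCoin] using hcoin
      have hij : i ≤ j := by
        by_contra hlt
        exact hai (Tset_mono G x (by omega) ha)
      exact Tset_mono G x hij (hwhite (hc.trans hcoin) i hgreedy)
  · rw [habs hterm]
    exact Tset_mono G x (Nat.zero_le j) (mem_Tset_zero.mpr hterm)

lemma mem_Tset_of_forall_isPlayStep {pos : ℕ → P} {c : ℕ → Bool}
    (hstep : ∀ n, G.IsPlayStep x (pos n) (c n) (pos (n + 1))) {m r : ℕ}
    (hm : pos m ∈ G.Tset x r) (hc : ∀ k < r, c (m + k) = G.descentCoin x (pos (m + k)))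
    (k : ℕ) : pos (m + k) ∈ G.Tset x (r - k) := by
  induction k with
  | zero => simpa using hm
  | succ k ih =>
    rcases lt_or_ge k r with hk | hk
    · rw [show r - k = r - (k + 1) + 1 by omega] at ih
      exact (hstep (m + k)).mem_Tset ih (hc k hk)
    · rw [show r - k = 0 by omega, mem_Tset_zero] at ih
      rw [show r - (k + 1) = 0 by omega, ← add_assoc, (hstep (m + k)).1 ih]
      exact mem_Tset_zero.mpr ih

lemma ne_of_forall_isPlayStep {pos : ℕ → P} {c : ℕ → Bool}
    (hstep : ∀ n, G.IsPlayStep x (pos n) (c n) (pos (n + 1))) {p : P} {i m n : ℕ}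
    (hpi : p ∈ G.Tset x (i + 1)) (hpi' : p ∉ G.Tset x i) (hm : pos m = p)
    (hc : ∀ k < i + 1, c (m + k) = G.descentCoin x (pos (m + k))) (hmn : m < n) :
    pos n ≠ p := by
  intro hn
  have := mem_Tset_of_forall_isPlayStep hstep (hm ▸ hpi) hc (n - m)
  rw [Nat.add_sub_cancel' hmn.le, hn] at this
  exact hpi' (Tset_mono G x (by omega) this)

end GameGraph

section RandomTurnPlay

variable {Ω : Type*} [MeasurableSpace Ω] {μ : Measure Ω} [IsProbabilityMeasure μ]
  {C : ℕ → Ω → Bool} {G : GameGraph P} {x : P → ℝ} {Pos : ℕ → Ω → P}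

lemma measure_inter_setOf_forall_coin_eq_descentCoin {hC : ∀ n, Measurable (C n)}
    (hind : iIndepFun C μ) (hfair : ∀ n, μ (C n ⁻¹' {true}) = 1 / 2)
    (hPos : ∀ n, ∃ f : (Fin n → Bool) → P, ∀ ω, Pos n ω = f fun i => C i ω) {m : ℕ}
    {B : Set Ω} (hB : MeasurableSet[coinFiltration C hC m] B) (r : ℕ) :
    μ (B ∩ {ω | ∀ k < r, C (m + k) ω = G.descentCoin x (Pos (m + k) ω)}) = 2⁻¹ ^ r * μ B :=
  measure_inter_setOf_forall_coin_eq hind hfair (h := fun n ω => G.descentCoin x (Pos n ω))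
    (fun n => @measurable_to_countable' Bool Ω _ _ (coinFiltration C hC n) _
      fun b => measurableSet_coinFiltration_preimage (hPos n) (G.descentCoin x ⁻¹' {b})) hB r

lemma le_measure_setOf_exists_terminal (hC : ∀ n, Measurable (C n)) (hind : iIndepFun C μ)
    (hfair : ∀ n, μ (C n ⁻¹' {true}) = 1 / 2)
    (hPos : ∀ n, ∃ f : (Fin n → Bool) → P, ∀ ω, Pos n ω = f fun i => C i ω)
    (hplay : ∀ ω n, G.IsPlayStep x (Pos n ω) (C n ω) (Pos (n + 1) ω)) {n : ℕ} {p₀ : P}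
    (hp₀ : ∀ ω, Pos 0 ω = p₀) (hp₀T : p₀ ∈ G.Tset x n) :
    (2 : ℝ≥0∞)⁻¹ ^ n ≤ μ {ω | ∃ m ≤ n, G.terminal (Pos m ω) = true} :=
  calc (2 : ℝ≥0∞)⁻¹ ^ n
      = μ (Set.univ ∩ {ω | ∀ k < n, C (0 + k) ω = G.descentCoin x (Pos (0 + k) ω)}) := by
        rw [measure_inter_setOf_forall_coin_eq_descentCoin (hC := hC) hind hfair hPos .univ,
          measure_univ, mul_one]
    _ ≤ μ {ω | ∃ m ≤ n, G.terminal (Pos m ω) = true} := measure_mono fun ω hω =>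
        ⟨n, le_rfl, GameGraph.mem_Tset_zero.mp <| by
          simpa using GameGraph.mem_Tset_of_forall_isPlayStep (hplay ω) (m := 0)
            (hp₀ ω ▸ hp₀T) hω.2 n⟩

lemma measure_setOf_infinite_visits_eq_zero (hC : ∀ n, Measurable (C n))
    (hind : iIndepFun C μ) (hfair : ∀ n, μ (C n ⁻¹' {true}) = 1 / 2)
    (hPos : ∀ n, ∃ f : (Fin n → Bool) → P, ∀ ω, Pos n ω = f fun i => C i ω)
    (hplay : ∀ ω n, G.IsPlayStep x (Pos n ω) (C n ω) (Pos (n + 1) ω)) {p : P}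
    (hp : G.terminal p = false) (hpT : p ∈ ⋃ i, G.Tset x i) :
    μ {ω | {n | Pos n ω = p}.Infinite} = 0 := by
  obtain ⟨j, hpj⟩ := Set.mem_iUnion.mp hpT
  obtain ⟨i, -, hpi, hpi'⟩ :=
    GameGraph.exists_mem_Tset_succ_notMem hp (GameGraph.Tset_mono G x j.le_succ hpj)
  exact measure_setOf_infinite_eq_zero_of_escape (ℱ := coinFiltration C hC)
    (V := fun n => Pos n ⁻¹' {p}) (fun n => measurableSet_coinFiltration_preimage (hPos n) _)
    (pow_ne_zero (i + 1) (ENNReal.inv_ne_zero.mpr ENNReal.ofNat_ne_top))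
    (fun m B hB => (measure_inter_setOf_forall_coin_eq_descentCoin hind hfair hPos hB _).ge)
    fun m n hmn => Set.disjoint_left.mpr fun ω ⟨hm, hω⟩ hn =>
      GameGraph.ne_of_forall_isPlayStep (hplay ω) hpi hpi' hm hω hmn hn

end RandomTurnPlay

theorem transience_of_T_general (G : GameGraph P) (x : P → ℝ)
    {Ω : Type} [MeasurableSpace Ω] (μ : Measure Ω) [IsProbabilityMeasure μ]
    (C : ℕ → Ω → Bool) (hCmeas : ∀ n, Measurable (C n))
    (hCindep : iIndepFun C μ)
    (hCfair : ∀ n, μ (C n ⁻¹' {true}) = 1 / 2)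
    (Pos : ℕ → Ω → P)
    (hAdapted : ∀ n, ∃ f : (Fin n → Bool) → P, ∀ ω, Pos n ω = f fun i => C i ω)
    (habs : ∀ n ω, G.terminal (Pos n ω) = true → Pos (n + 1) ω = Pos n ω)
    (hWintoT : ∀ n ω, ∀ h : G.terminal (Pos n ω) = false, C n ω = true → ∀ i,
      (∃ w ∈ G.W (Pos n ω), w ∈ G.Tset x i ∧
        x w = (G.W (Pos n ω)).sup' (G.Wne _ h) x) →
      Pos (n + 1) ω ∈ G.Tset x i)
    (hBmove : ∀ n ω, G.terminal (Pos n ω) = false → C n ω = false →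
      Pos (n + 1) ω ∈ G.B (Pos n ω)) :
    (∀ n : ℕ, ∀ p0 : P, (∀ ω, Pos 0 ω = p0) → p0 ∈ G.Tset x n →
      ((2 : ENNReal))⁻¹ ^ n ≤ μ {ω | ∃ m ≤ n, G.terminal (Pos m ω) = true}) ∧
    μ {ω | ∃ p ∈ ⋃ i, G.Tset x i, G.terminal p = false ∧
        {n : ℕ | Pos n ω = p}.Infinite} = 0 := by
  have hplay : ∀ ω n, G.IsPlayStep x (Pos n ω) (C n ω) (Pos (n + 1) ω) := fun ω n =>
    ⟨habs n ω, fun hc i ⟨h, hw⟩ => hWintoT n ω h hc i hw, hBmove n ω⟩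
  refine ⟨fun n p₀ => le_measure_setOf_exists_terminal hCmeas hCindep hCfair hAdapted hplay,
    measure_mono_null (fun ω ⟨p, hpT, hp, hinf⟩ => Set.mem_iUnion.mpr ⟨⟨p, hpT, hp⟩, hinf⟩)
      (measure_iUnion_null fun p : {p // p ∈ ⋃ i, G.Tset x i ∧ G.terminal p = false} =>
        measure_setOf_infinite_visits_eq_zero hCmeas hCindep hCfair hAdapted hplay
          p.2.2 p.2.1)⟩

/-- in random-turn play where White plays `x`-greedily and, whenever
an `x`-greedy move into some `T_i` exists, moves into `T_i` with minimal index,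
then from a starting position in `T_n` the probability of reaching a terminal
position within `n` moves is at least `2^{−n}`; consequently, almost surely no
non-terminal position of `T = ⋃ T_i` is visited infinitely often. -/
theorem transience_of_T (G : GameGraph P) (x : P → ℝ)
    {Ω : Type} [MeasurableSpace Ω] (μ : Measure Ω) [IsProbabilityMeasure μ]
    (C : ℕ → Ω → Bool) (hCmeas : ∀ n, Measurable (C n))
    (hCindep : iIndepFun C μ)
    (hCfair : ∀ n, μ (C n ⁻¹' {true}) = 1 / 2)
    (Pos : ℕ → Ω → P)
    (hAdapted : ∀ n, ∃ f : (Fin n → Bool) → P, ∀ ω, Pos n ω = f fun i => C i ω)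
    (habs : ∀ n ω, G.terminal (Pos n ω) = true → Pos (n + 1) ω = Pos n ω)
    (hWgreedy : ∀ n ω, ∀ h : G.terminal (Pos n ω) = false, C n ω = true →
      Pos (n + 1) ω ∈ G.W (Pos n ω) ∧
      x (Pos (n + 1) ω) = (G.W (Pos n ω)).sup' (G.Wne _ h) x)
    (hWintoT : ∀ n ω, ∀ h : G.terminal (Pos n ω) = false, C n ω = true → ∀ i,
      (∃ w ∈ G.W (Pos n ω), w ∈ G.Tset x i ∧
        x w = (G.W (Pos n ω)).sup' (G.Wne _ h) x) →
      Pos (n + 1) ω ∈ G.Tset x i)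
    (hBmove : ∀ n ω, G.terminal (Pos n ω) = false → C n ω = false →
      Pos (n + 1) ω ∈ G.B (Pos n ω)) :
    (∀ n : ℕ, ∀ p0 : P, (∀ ω, Pos 0 ω = p0) → p0 ∈ G.Tset x n →
      ((2 : ENNReal))⁻¹ ^ n ≤ μ {ω | ∃ m ≤ n, G.terminal (Pos m ω) = true}) ∧
    μ {ω | ∃ p ∈ ⋃ i, G.Tset x i, G.terminal p = false ∧
        {n : ℕ | Pos n ω = p}.Infinite} = 0 :=
  transience_of_T_general G x μ C hCmeas hCindep hCfair Pos hAdapted habs hWintoT hBmove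
end

section
/- Let x be a Richman function on a finite game graph and call a non-terminal position P quiescent if min over Black options b of x(P_b) equals max over White options w of x(P_w). Let T be the stabilized closure set defined from x-greedy White moves as above. If every quiescent position belongs to T, then every position belongs to T. -/
open Finset

variable {P : Type} [Fintype P] [DecidableEq P]

/-- A non-terminal position is quiescent for `x` if the best Black option value
equals the best White option value. -/
def GameGraph.Quiescent (G : GameGraph P) (x : P → ℝ) (p : P) : Prop :=
  ∃ h : G.terminal p = false,
    (G.B p).inf' (G.Bne p h) x = (G.W p).sup' (G.Wne p h) x

/-- if `x` is a Richman function and every quiescent position lies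
in `T = ⋃ n T_n`, then every position lies in `T`. -/
theorem quiescent_in_T_implies_all (G : GameGraph P) (x : P → ℝ)
    (hx : G.IsRichman x)
    (hq : ∀ p, G.Quiescent x p → p ∈ ⋃ n, G.Tset x n) :
    ∀ p : P, p ∈ ⋃ n, G.Tset x n := by
  classical
  set S := ⋃ n, G.Tset x n with hS
  have mono : ∀ n m, n ≤ m → G.Tset x n ⊆ G.Tset x m := by
    intro n m h
    induction h with
    | refl => exact subset_rfl
    | step _ ih =>
      exact ih.trans (fun p hp => Set.mem_union_left _ (Set.mem_union_left _ hp))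
  have step : ∀ p : P, (∀ q : P, x p < x q → q ∈ S) → p ∈ S := by
    intro p ih
    by_cases ht : G.terminal p = true
    · exact Set.mem_iUnion.2 ⟨0, ht⟩
    · have ht' : G.terminal p = false := by simpa using ht
      by_cases hquiet : (G.B p).inf' (G.Bne p ht') x = (G.W p).sup' (G.Wne p ht') x
      · exact hq p ⟨ht', hquiet⟩
      · have hxp := hx.2.2 p ht'
        rcases lt_or_gt_of_ne hquiet with hlt | hgt
        · -- inf < sup : greedy White move has strictly larger value
          have hsup : x p < (G.W p).sup' (G.Wne p ht') x := by linarith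
          obtain ⟨w, hw, hwe⟩ := Finset.exists_mem_eq_sup' (G.Wne p ht') x
          have hw2 : x p < x w := hwe ▸ hsup
          obtain ⟨n, hn⟩ := Set.mem_iUnion.1 (ih w hw2)
          exact Set.mem_iUnion.2 ⟨n + 1,
            Set.mem_union_left _ (Set.mem_union_right _ ⟨ht', w, hw, hn, hwe.symm⟩)⟩
        · -- sup < inf : all Black options have strictly larger value
          have hinf : x p < (G.B p).inf' (G.Bne p ht') x := by linarith
          have hb : ∀ b ∈ G.B p, b ∈ S := fun b hbmem =>
            ih b (lt_of_lt_of_le hinf (Finset.inf'_le _ hbmem))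
          choose f hf using fun b (h : b ∈ G.B p) => Set.mem_iUnion.1 (hb b h)
          set N := (G.B p).attach.sup (fun b => f b.1 b.2) with hN
          refine Set.mem_iUnion.2 ⟨N + 1, Set.mem_union_right _ ?_⟩
          intro b hbmem
          exact mono (f b hbmem) N
            (Finset.le_sup (f := fun b : {y // y ∈ G.B p} => f b.1 b.2)
              (Finset.mem_attach _ ⟨b, hbmem⟩)) (hf b hbmem)
  intro p
  have main : ∀ k, ∀ p : P,
      (Finset.univ.filter (fun q => x p < x q)).card = k → p ∈ S := by
    intro k
    induction k using Nat.strong_induction_on with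
    | _ k ihk =>
      intro p hp
      apply step p
      intro q hq'
      have hsub : (Finset.univ.filter (fun r => x q < x r)) ⊆
          (Finset.univ.filter (fun r => x p < x r)) := by
        intro r hr
        simp only [Finset.mem_filter, Finset.mem_univ, true_and] at hr ⊢
        exact hq'.trans hr
      have hss : (Finset.univ.filter (fun r => x q < x r)) ⊂
          (Finset.univ.filter (fun r => x p < x r)) := by
        refine (Finset.ssubset_iff_of_subset hsub).2 ⟨q, ?_, ?_⟩
        · simp [hq']
        · simp
      have hlt := Finset.card_lt_card hss
      rw [hp] at hlt
      exact ihk _ hlt q rfl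
  exact main _ p rfl
end
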